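/- arXiv:1605.02027 — 4 statements merged into one kernel-verified Lean document; each statement's English description precedes it below -/
import Mathlib

section
/- Let $D$ be an $n\times n$ real matrix with $D_{ij}\ge 0$ for all $i\ne j$. Then $D$ is irreducible if and only if for every $t>0$ all entries of the matrix exponential $\exp(tD)$ are strictly positive. -/
/-!
Shifting `D` by a large multiple of the identity gives an entrywise nonnegative matrix
`A = D + c • 1` that commutes with the shift, so `exp (t • D)` is a positive multiple of
`exp (t • A)`. For nonnegative `A`, the power series shows that `exp A i j > 0` exactly when some
power `A ^ k` has a positive `(i, j)` entry, i.e. when `j` is reachable from `i` along positive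
entries of `A`. Off the diagonal these are the positive entries of `D`, and diagonal steps can be
dropped from any such chain.
-/

open NormedSpace Relation
open scoped Nat

namespace Relation

variable {α : Type*} {r : α → α → Prop} {a b : α}

theorem reflTransGen_iff_reflTransGen_ne_and :
    ReflTransGen r a b ↔ ReflTransGen (fun x y => x ≠ y ∧ r x y) a b := by
  refine ⟨fun h => ?_, fun h => ReflTransGen.mono (fun _ _ hxy => hxy.2) _ _ h⟩
  induction h with
  | refl => exact .refl
  | @tail b c _ hbc ih =>
    by_cases hb : b = c
    · exact hb ▸ ih
    · exact ih.tail ⟨hb, hbc⟩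

theorem transGen_iff_exists_chain :
    TransGen r a b ↔
      ∃ k, 1 ≤ k ∧ ∃ l : ℕ → α, l 0 = a ∧ l k = b ∧ ∀ m, m < k → r (l m) (l (m + 1)) := by
  constructor
  · intro h
    induction h with
    | single hab =>
      exact ⟨1, le_rfl, fun m => if m = 0 then a else _, rfl, rfl, fun m hm => by
        simpa [Nat.lt_one_iff.mp hm] using hab⟩
    | @tail b c _ hbc ih =>
      obtain ⟨k, hk, l, hl0, hlk, hl⟩ := ih
      refine ⟨k + 1, by omega, Function.update l (k + 1) c, ?_, by simp, fun m hm => ?_⟩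
      · simpa [Function.update_of_ne (show (0 : ℕ) ≠ k + 1 by omega)] using hl0
      · rcases Nat.lt_succ_iff_lt_or_eq.mp hm with hm | rfl
        · simpa [Function.update_of_ne (show m ≠ k + 1 by omega),
            Function.update_of_ne (show m + 1 ≠ k + 1 by omega)] using hl m hm
        · simpa [Function.update_of_ne (show m ≠ m + 1 by omega), hlk] using hbc
  · rintro ⟨k, hk, l, rfl, rfl, hl⟩
    have hreach : ∀ m ≤ k, ReflTransGen r (l 0) (l m) := by
      intro m hm
      induction m with
      | zero => exact .refl
      | succ m ih => exact (ih (by omega)).tail (hl m (by omega))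
    obtain ⟨k, rfl⟩ := Nat.exists_eq_add_of_le' hk
    exact TransGen.tail' (hreach k (by omega)) (hl k (by omega))

end Relation

namespace Matrix

variable {ι : Type*} [Fintype ι] [DecidableEq ι]

theorem hasSum_exp_apply (A : Matrix ι ι ℝ) (i j : ι) :
    HasSum (fun k => (k !⁻¹ : ℝ) * (A ^ k) i j) (exp A i j) := by
  -- `Matrix` carries no norm instance; the series converges for any algebra norm, e.g. this one
  have h := open scoped Norms.Operator in exp_series_hasSum_exp' (𝕂 := ℝ) A
  exact Pi.hasSum.mp (Pi.hasSum.mp h i) j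

theorem exp_add_smul_one (A : Matrix ι ι ℝ) (c : ℝ) :
    exp (A + c • 1) = Real.exp c • exp A := by
  rw [exp_add_of_commute _ _ ((Commute.one_right A).smul_right c), smul_one_eq_diagonal,
    exp_diagonal, show (exp fun _ : ι => c) = fun _ => Real.exp c from
      funext fun _ => by rw [Pi.coe_exp, Real.exp_eq_exp_ℝ], ← smul_one_eq_diagonal,
    mul_smul_comm, mul_one]

variable {A : Matrix ι ι ℝ}

theorem exp_apply_pos_iff_exists_pow_apply_pos (hA : ∀ i j, 0 ≤ A i j) (i j : ι) :
    0 < exp A i j ↔ ∃ k, 0 < (A ^ k) i j := by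
  have hterm : ∀ k, 0 ≤ (k !⁻¹ : ℝ) * (A ^ k) i j :=
    fun k => mul_nonneg (by positivity) (pow_apply_nonneg hA k i j)
  constructor
  · intro hpos
    by_contra! hzero
    have : ∀ k, (k !⁻¹ : ℝ) * (A ^ k) i j ≤ 0 := fun k =>
      mul_nonpos_of_nonneg_of_nonpos (by positivity) (hzero k)
    exact (hasSum_exp_apply A i j).nonpos this |>.not_gt hpos
  · rintro ⟨k, hk⟩
    calc 0 < (k !⁻¹ : ℝ) * (A ^ k) i j := by positivity
      _ ≤ exp A i j := le_hasSum (hasSum_exp_apply A i j) k fun m _ => hterm m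

theorem exists_pow_apply_pos_iff_reflTransGen (hA : ∀ i j, 0 ≤ A i j) (i j : ι) :
    (∃ k, 0 < (A ^ k) i j) ↔ ReflTransGen (fun a b => 0 < A a b) i j := by
  constructor
  · rintro ⟨k, hk⟩
    induction k generalizing j with
    | zero =>
      obtain rfl : i = j := by by_contra h; simp [one_apply_ne h] at hk
      exact .refl
    | succ k ih =>
      rw [pow_succ, mul_apply, Finset.sum_pos_iff_of_nonneg
        fun m _ => mul_nonneg (pow_apply_nonneg hA k i m) (hA m j)] at hk
      obtain ⟨m, -, hm⟩ := hk
      exact (ih m ((pow_apply_nonneg hA k i m).lt_of_ne' (left_ne_zero_of_mul hm.ne'))).tail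
        ((hA m j).lt_of_ne' (right_ne_zero_of_mul hm.ne'))
  · intro h
    induction h with
    | refl => exact ⟨0, by simp⟩
    | @tail b c _ hbc ih =>
      obtain ⟨k, hk⟩ := ih
      refine ⟨k + 1, ?_⟩
      calc 0 < (A ^ k) i b * A b c := mul_pos hk hbc
        _ ≤ (A ^ (k + 1)) i c := by
          rw [pow_succ, mul_apply]
          exact Finset.single_le_sum (f := fun m => (A ^ k) i m * A m c)
            (fun m _ => mul_nonneg (pow_apply_nonneg hA k i m) (hA m c)) (Finset.mem_univ b)

theorem exists_nonneg_add_smul_one {D : Matrix ι ι ℝ} (hD : ∀ i j, i ≠ j → 0 ≤ D i j) :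
    ∃ c : ℝ, ∀ i j, 0 ≤ (D + c • 1) i j := by
  refine ⟨∑ k, |D k k|, fun i j => ?_⟩
  rcases eq_or_ne i j with rfl | hij
  · have := Finset.single_le_sum (f := fun k => |D k k|) (fun k _ => abs_nonneg _)
      (Finset.mem_univ i)
    simp only [add_apply, smul_apply, one_apply_eq, smul_eq_mul, mul_one]
    linarith [neg_abs_le (D i i)]
  · simpa [one_apply_ne hij] using hD i j hij

theorem exp_smul_apply_pos_iff {D : Matrix ι ι ℝ} (hD : ∀ i j, i ≠ j → 0 ≤ D i j) {t : ℝ}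
    (ht : 0 < t) (i j : ι) :
    0 < exp (t • D) i j ↔ ReflTransGen (fun a b => a ≠ b ∧ 0 < D a b) i j := by
  obtain ⟨c, hA⟩ := exists_nonneg_add_smul_one hD
  have htA : ∀ a b, 0 ≤ (t • (D + c • 1)) a b := fun a b => mul_nonneg ht.le (hA a b)
  have hsplit : t • D = t • (D + c • 1) + (-(t * c)) • 1 := by module
  rw [hsplit, exp_add_smul_one, smul_apply, smul_eq_mul, mul_pos_iff_of_pos_left (Real.exp_pos _),
    exp_apply_pos_iff_exists_pow_apply_pos htA, exists_pow_apply_pos_iff_reflTransGen htA,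
    reflTransGen_iff_reflTransGen_ne_and]
  refine iff_of_eq (congrArg (ReflTransGen · i j) (funext₂ fun a b => propext ?_))
  exact and_congr_right fun hab => by simp [one_apply_ne hab, mul_pos_iff_of_pos_left ht]

end Matrix

/-- **Irreducibility and positivity of the dispersal semigroup.**
Let `D` be an `n × n` real matrix with nonnegative off-diagonal entries.
Then `D` is irreducible (for every pair of indices `i ≠ j` there is a chain
`i = l 0, l 1, …, l k = j` with `k ≥ 1`, consecutive indices distinct, and
`D (l m) (l (m+1)) > 0` for each `m < k`) if and only if for every `t > 0`
all entries of the matrix exponential `exp (t • D)` are strictly positive. -/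
theorem dispersal_irreducible_iff_exp_pos {n : ℕ} (D : Matrix (Fin n) (Fin n) ℝ)
    (hoff : ∀ i j : Fin n, i ≠ j → 0 ≤ D i j) :
    (∀ i j : Fin n, i ≠ j →
      ∃ k : ℕ, 1 ≤ k ∧ ∃ l : ℕ → Fin n, l 0 = i ∧ l k = j ∧
        ∀ m : ℕ, m < k → l m ≠ l (m + 1) ∧ 0 < D (l m) (l (m + 1)))
    ↔ (∀ t : ℝ, 0 < t → ∀ i j : Fin n, 0 < NormedSpace.exp (t • D) i j) := by
  set R : Fin n → Fin n → Prop := fun a b => a ≠ b ∧ 0 < D a b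
  calc _ ↔ ∀ i j, i ≠ j → TransGen R i j :=
        forall₂_congr fun _ _ => imp_congr_right fun _ => transGen_iff_exists_chain.symm
    _ ↔ ∀ i j, ReflTransGen R i j := by
        refine forall₂_congr fun i j => ?_
        rw [reflTransGen_iff_eq_or_transGen, or_iff_not_imp_left, eq_comm]
    _ ↔ _ :=
        ⟨fun h _ ht i j => (Matrix.exp_smul_apply_pos_iff hoff ht i j).2 (h i j),
          fun h i j => (Matrix.exp_smul_apply_pos_iff hoff one_pos i j).1 (h 1 one_pos i j)⟩
end

section
/- Let $a_1,a_2\in\mathbb{R}$ with $a_1\ne a_2$ and $\sigma\in\mathbb{R}$, and define $r(\alpha)=\dfrac{a_1+a_2-2\alpha+\sqrt{(a_1-a_2)^2+4\alpha^2}}{2}-\dfrac{\sigma^2}{2}$. Then $r$ is strictly decreasing on $(0,\infty)$: for all $0<\alpha_1<\alpha_2$ one has $r(\alpha_2)<r(\alpha_1)$. -/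
/-- **The stochastic growth rate is a strictly decreasing function of the dispersal rate.**
For `a₁ ≠ a₂`, the function
`r α = (a₁ + a₂ - 2α + √((a₁-a₂)² + 4α²))/2 - σ²/2` is strictly decreasing on `(0,∞)`. -/
theorem growth_rate_strictly_decreasing (a₁ a₂ σ : ℝ) (ha : a₁ ≠ a₂) :
    ∀ α₁ α₂ : ℝ, 0 < α₁ → α₁ < α₂ →
      (a₁ + a₂ - 2 * α₂ + Real.sqrt ((a₁ - a₂) ^ 2 + 4 * α₂ ^ 2)) / 2 - σ ^ 2 / 2 <
      (a₁ + a₂ - 2 * α₁ + Real.sqrt ((a₁ - a₂) ^ 2 + 4 * α₁ ^ 2)) / 2 - σ ^ 2 / 2 := by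
  intro α₁ α₂ h1 h12
  have hne : a₁ - a₂ ≠ 0 := sub_ne_zero.mpr ha
  have hd : (0:ℝ) < (a₁ - a₂) ^ 2 := by positivity
  have hnn1 : (0:ℝ) ≤ (a₁ - a₂) ^ 2 + 4 * α₁ ^ 2 := by positivity
  have hnn2 : (0:ℝ) ≤ (a₁ - a₂) ^ 2 + 4 * α₂ ^ 2 := by positivity
  set s₁ := Real.sqrt ((a₁ - a₂) ^ 2 + 4 * α₁ ^ 2) with hs₁
  set s₂ := Real.sqrt ((a₁ - a₂) ^ 2 + 4 * α₂ ^ 2) with hs₂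
  have hsq1 : s₁ ^ 2 = (a₁ - a₂) ^ 2 + 4 * α₁ ^ 2 := Real.sq_sqrt hnn1
  have hsq2 : s₂ ^ 2 = (a₁ - a₂) ^ 2 + 4 * α₂ ^ 2 := Real.sq_sqrt hnn2
  have hl1 : 2 * α₁ < s₁ := by
    rw [hs₁]
    rw [show (2*α₁) = Real.sqrt ((2*α₁)^2) from (Real.sqrt_sq (by linarith)).symm]
    apply Real.sqrt_lt_sqrt (by positivity)
    nlinarith
  have hl2 : 2 * α₂ < s₂ := by
    rw [hs₂]
    rw [show (2*α₂) = Real.sqrt ((2*α₂)^2) from (Real.sqrt_sq (by linarith)).symm]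
    apply Real.sqrt_lt_sqrt (by positivity)
    nlinarith
  have key : s₂ - s₁ < 2 * (α₂ - α₁) := by nlinarith
  linarith
end

section
/- Let $a_1,a_2\in\mathbb{R}$, $\alpha,\beta>0$, and $\sigma_1,\sigma_2\in\mathbb{R}$ with $s^2:=\sigma_1^2+\sigma_2^2>0$. On $(0,1)$ define the drift $\mu(x)=\beta(1-x)-\alpha x+x(1-x)\big((a_1-\sigma_1^2 x)-(a_2-\sigma_2^2(1-x))\big)$ and the diffusion coefficient $v(x)=s^2\,x^2(1-x)^2$. Set $\alpha_1=\dfrac{2\sigma_1^2}{s^2}$, $\alpha_2=\dfrac{2\sigma_2^2}{s^2}$, $\widehat\beta=\dfrac{2}{s^2}(a_1-a_2+\beta-\alpha)$, and define $\rho(x)=x^{\widehat\beta-\alpha_1}(1-x)^{-\widehat\beta-\alpha_2}\exp\!\left(-\dfrac{2}{s^2}\left(\dfrac{\beta}{x}+\dfrac{\alpha}{1-x}\right)\right)$ for $x\in(0,1)$. Then for every $x\in(0,1)$, $\dfrac{d}{dx}\!\left(\tfrac12 v(x)\rho(x)\right)=\mu(x)\rho(x)$; consequently $\rho$ solves the stationary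 Fokker–Planck equation $-\dfrac{d}{dx}\big(\mu(x)\rho(x)\big)+\dfrac12\dfrac{d^2}{dx^2}\big(v(x)\rho(x)\big)=0$ on $(0,1)$. -/
/-!
Writing `ρ = x^p (1-x)^q exp(-c (β/x + α/(1-x)))`, the logarithmic derivative of `ρ` is
`p/x - q/(1-x) + c (β/x² - α/(1-x)²)`. By the product rule `(½ v ρ)' = (½ v' + ½ v ρ'/ρ) ρ`, and
since `v` vanishes to second order at `0` and `1` the bracket is a polynomial in `x`; for
`s = σ₁² + σ₂²`, `c = 2/s` and the exponents of the statement it equals the drift `μ`, which is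
the zero-flux identity `(½ v ρ)' = μ ρ`. Differentiating it once more gives the
stationary Fokker–Planck equation.
-/

open Set Topology

noncomputable def twoPatchDensity (p q c α β x : ℝ) : ℝ :=
  x ^ p * (1 - x) ^ q * Real.exp (-c * (β / x + α / (1 - x)))

theorem hasDerivAt_twoPatchDensity (p q c α β : ℝ) {x : ℝ} (hx : x ∈ Ioo (0 : ℝ) 1) :
    HasDerivAt (twoPatchDensity p q c α β)
      ((p / x - q / (1 - x) + c * (β / x ^ 2 - α / (1 - x) ^ 2)) *
        twoPatchDensity p q c α β x) x := by
  obtain ⟨hx0, hx1⟩ := hx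
  have h1x : 0 < 1 - x := by linarith
  have hsub : HasDerivAt (fun y : ℝ => 1 - y) (-1) x := by
    simpa using (hasDerivAt_id x).const_sub 1
  have hpow : HasDerivAt (fun y : ℝ => y ^ p) (p * x ^ (p - 1)) x :=
    Real.hasDerivAt_rpow_const (Or.inl hx0.ne')
  have hpow' : HasDerivAt (fun y : ℝ => (1 - y) ^ q) (q * (1 - x) ^ (q - 1) * (-1)) x :=
    (Real.hasDerivAt_rpow_const (Or.inl h1x.ne')).comp x hsub
  have hinv : HasDerivAt (fun y : ℝ => β / y) (β * -(x ^ 2)⁻¹) x := by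
    simpa [div_eq_mul_inv] using (hasDerivAt_inv hx0.ne').const_mul β
  have hinv' : HasDerivAt (fun y : ℝ => α / (1 - y)) (α * (-((1 - x) ^ 2)⁻¹ * (-1))) x := by
    simpa [div_eq_mul_inv] using ((hasDerivAt_inv h1x.ne').comp x hsub).const_mul α
  have hexp : HasDerivAt (fun y => Real.exp (-c * (β / y + α / (1 - y))))
      (Real.exp (-c * (β / x + α / (1 - x))) *
        (-c * (β * -(x ^ 2)⁻¹ + α * (-((1 - x) ^ 2)⁻¹ * (-1))))) x :=
    ((hinv.add hinv').const_mul (-c)).exp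
  refine ((hpow.mul hpow').mul hexp).congr_deriv ?_
  rw [twoPatchDensity, Pi.mul_apply, Real.rpow_sub_one hx0.ne', Real.rpow_sub_one h1x.ne']
  generalize Real.exp _ = E
  field_simp
  ring

theorem hasDerivAt_half_diffusion_mul_twoPatchDensity (a₁ a₂ α β σ₁ σ₂ : ℝ) {s : ℝ}
    (hs : s ≠ 0) (hsσ : s = σ₁ ^ 2 + σ₂ ^ 2) {x : ℝ} (hx : x ∈ Ioo (0 : ℝ) 1) :
    HasDerivAt (fun y => 1 / 2 * (s * y ^ 2 * (1 - y) ^ 2) *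
        twoPatchDensity (2 / s * (a₁ - a₂ + β - α) - 2 * σ₁ ^ 2 / s)
          (-(2 / s * (a₁ - a₂ + β - α)) - 2 * σ₂ ^ 2 / s) (2 / s) α β y)
      ((β * (1 - x) - α * x + x * (1 - x) * ((a₁ - σ₁ ^ 2 * x) - (a₂ - σ₂ ^ 2 * (1 - x)))) *
        twoPatchDensity (2 / s * (a₁ - a₂ + β - α) - 2 * σ₁ ^ 2 / s)
          (-(2 / s * (a₁ - a₂ + β - α)) - 2 * σ₂ ^ 2 / s) (2 / s) α β x) x := by
  have hx0 : x ≠ 0 := hx.1.ne'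
  have h1x : 1 - x ≠ 0 := by linarith [hx.2]
  have hweight : HasDerivAt (fun y : ℝ => 1 / 2 * (s * y ^ 2 * (1 - y) ^ 2))
      (1 / 2 * (s * (2 * x) * (1 - x) ^ 2 + s * x ^ 2 * (2 * (1 - x) * (-1)))) x := by
    have hsub : HasDerivAt (fun y : ℝ => 1 - y) (-1) x := by
      simpa using (hasDerivAt_id x).const_sub 1
    simpa using (((hasDerivAt_pow 2 x).const_mul s).mul (hsub.pow 2)).const_mul (1 / 2 : ℝ)
  refine (hweight.mul (hasDerivAt_twoPatchDensity _ _ _ α β hx)).congr_deriv ?_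
  generalize twoPatchDensity _ _ _ α β x = r
  subst hsσ
  field_simp
  ring

theorem stationary_fokkerPlanck_of_hasDerivAt {U : Set ℝ} (hU : IsOpen U) {μ v ρ : ℝ → ℝ}
    (hflux : ∀ x ∈ U, HasDerivAt (fun y => 1 / 2 * v y * ρ y) (μ x * ρ x) x) :
    ∀ x ∈ U,
      -(deriv (fun y => μ y * ρ y) x) + 1 / 2 * deriv (deriv (fun y => v y * ρ y)) x = 0 := by
  intro x hx
  have hderiv : deriv (fun y => v y * ρ y) =ᶠ[𝓝 x] fun y => 2 * (μ y * ρ y) := by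
    filter_upwards [hU.mem_nhds hx] with y hy
    have := (hflux y hy).const_mul 2
    simp only [← mul_assoc, show (2 : ℝ) * (1 / 2) = 1 by norm_num, one_mul] at this
    rw [this.deriv, mul_assoc]
  rw [hderiv.deriv_eq, deriv_const_mul_field]
  ring

theorem invariant_density_solves_fokker_planck_general (a₁ a₂ α β σ₁ σ₂ : ℝ)
    (hs : 0 < σ₁ ^ 2 + σ₂ ^ 2)
    (μ v ρ : ℝ → ℝ)
    (hμ : ∀ x : ℝ, μ x = β * (1 - x) - α * x +
      x * (1 - x) * ((a₁ - σ₁ ^ 2 * x) - (a₂ - σ₂ ^ 2 * (1 - x))))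
    (hv : ∀ x : ℝ, v x = (σ₁ ^ 2 + σ₂ ^ 2) * x ^ 2 * (1 - x) ^ 2)
    (hρ : ∀ x ∈ Set.Ioo (0 : ℝ) 1, ρ x =
      x ^ ((2 / (σ₁ ^ 2 + σ₂ ^ 2)) * (a₁ - a₂ + β - α) - 2 * σ₁ ^ 2 / (σ₁ ^ 2 + σ₂ ^ 2)) *
      (1 - x) ^ (-((2 / (σ₁ ^ 2 + σ₂ ^ 2)) * (a₁ - a₂ + β - α)) - 2 * σ₂ ^ 2 / (σ₁ ^ 2 + σ₂ ^ 2)) *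
      Real.exp (-(2 / (σ₁ ^ 2 + σ₂ ^ 2)) * (β / x + α / (1 - x)))) :
    (∀ x ∈ Set.Ioo (0 : ℝ) 1,
      HasDerivAt (fun y => (1 / 2 : ℝ) * v y * ρ y) (μ x * ρ x) x) ∧
    (∀ x ∈ Set.Ioo (0 : ℝ) 1,
      -(deriv (fun y => μ y * ρ y) x) +
        (1 / 2 : ℝ) * deriv (deriv (fun y => v y * ρ y)) x = 0) := by
  have hflux : ∀ x ∈ Ioo (0 : ℝ) 1,
      HasDerivAt (fun y => (1 / 2 : ℝ) * v y * ρ y) (μ x * ρ x) x := by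
    intro x hx
    have hρ_eq : ∀ y ∈ Ioo (0 : ℝ) 1, ρ y = twoPatchDensity _ _ _ α β y := hρ
    rw [hμ, hρ_eq x hx]
    refine (hasDerivAt_half_diffusion_mul_twoPatchDensity a₁ a₂ α β σ₁ σ₂ hs.ne' rfl hx)
      |>.congr_of_eventuallyEq ?_
    filter_upwards [isOpen_Ioo.mem_nhds hx] with y hy
    rw [hv, hρ_eq y hy]
  exact ⟨hflux, stationary_fokkerPlanck_of_hasDerivAt isOpen_Ioo hflux⟩

/-- **The explicit invariant density solves the stationary Fokker–Planck equation.**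
For the two-patch proportion diffusion on `(0,1)` with drift `μ` and diffusion
coefficient `v`, the (unnormalized) density
`ρ x = x^(β̂-α₁) (1-x)^(-β̂-α₂) exp(-(2/s²)(β/x + α/(1-x)))`
satisfies `(½ v ρ)' = μ ρ` on `(0,1)`, and consequently
`-(μρ)' + ½ (vρ)'' = 0` on `(0,1)`. -/
theorem invariant_density_solves_fokker_planck (a₁ a₂ α β σ₁ σ₂ : ℝ)
    (hα : 0 < α) (hβ : 0 < β) (hs : 0 < σ₁ ^ 2 + σ₂ ^ 2)
    (μ v ρ : ℝ → ℝ)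
    (hμ : ∀ x : ℝ, μ x = β * (1 - x) - α * x +
      x * (1 - x) * ((a₁ - σ₁ ^ 2 * x) - (a₂ - σ₂ ^ 2 * (1 - x))))
    (hv : ∀ x : ℝ, v x = (σ₁ ^ 2 + σ₂ ^ 2) * x ^ 2 * (1 - x) ^ 2)
    (hρ : ∀ x ∈ Set.Ioo (0 : ℝ) 1, ρ x =
      x ^ ((2 / (σ₁ ^ 2 + σ₂ ^ 2)) * (a₁ - a₂ + β - α) - 2 * σ₁ ^ 2 / (σ₁ ^ 2 + σ₂ ^ 2)) *
      (1 - x) ^ (-((2 / (σ₁ ^ 2 + σ₂ ^ 2)) * (a₁ - a₂ + β - α)) - 2 * σ₂ ^ 2 / (σ₁ ^ 2 + σ₂ ^ 2)) *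
      Real.exp (-(2 / (σ₁ ^ 2 + σ₂ ^ 2)) * (β / x + α / (1 - x)))) :
    (∀ x ∈ Set.Ioo (0 : ℝ) 1,
      HasDerivAt (fun y => (1 / 2 : ℝ) * v y * ρ y) (μ x * ρ x) x) ∧
    (∀ x ∈ Set.Ioo (0 : ℝ) 1,
      -(deriv (fun y => μ y * ρ y) x) +
        (1 / 2 : ℝ) * deriv (deriv (fun y => v y * ρ y)) x = 0) :=
  invariant_density_solves_fokker_planck_general a₁ a₂ α β σ₁ σ₂ hs μ v ρ hμ hv hρ
end

section
/- Let $a_1,a_2\in\mathbb{R}$, $b_1,b_2,\alpha,\beta>0$, and let $\sigma_1=\sigma_2=\sigma$ with $\sigma\ne 0$, and assume $\beta+(b_2/b_1)(a_1-a_2-\alpha+\beta)-\alpha (b_2/b_1)^2\ne 0$. Define the vector fields $A_0(z,y)=\Big((b_2-b_1z)zy+\beta+\widehat a_1 z-\alpha z^2,\; y\big(\widehat a_2-\tfrac{\sigma^2}{2}-b_2y\big)+\alpha zy\Big)$ with $\widehat a_1=a_1-a_2-\alpha+\beta$ and $\widehat a_2=a_2-\beta$, and $A_1(z,y)=(0,\sigma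 y)$. Then for every point $(z,y)$ with $z>0$ and $y>0$, the three vectors $A_1(z,y)$, $[A_0,A_1](z,y)$, and $[A_0,[A_0,A_1]](z,y)$ span $\mathbb{R}^2$. -/
/-- Partial derivative in the first coordinate `z` of a function of two real variables. -/
noncomputable def pderivZ (f : ℝ → ℝ → ℝ) (z y : ℝ) : ℝ := deriv (fun z' => f z' y) z

/-- Partial derivative in the second coordinate `y` of a function of two real variables. -/
noncomputable def pderivY (f : ℝ → ℝ → ℝ) (z y : ℝ) : ℝ := deriv (fun y' => f z y') y

/-- The Lie bracket `[Φ, Ψ]` of two vector fields on `ℝ²` with coordinates `(z, y)`: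
`[Φ,Ψ]ⱼ = Φ₁ ∂_z Ψⱼ - Ψ₁ ∂_z Φⱼ + Φ₂ ∂_y Ψⱼ - Ψ₂ ∂_y Φⱼ` for `j = 1, 2`. -/
noncomputable def lieBracket2 (Φ Ψ : ℝ → ℝ → ℝ × ℝ) (z y : ℝ) : ℝ × ℝ :=
  ((Φ z y).1 * pderivZ (fun a b => (Ψ a b).1) z y
      - (Ψ z y).1 * pderivZ (fun a b => (Φ a b).1) z y
      + (Φ z y).2 * pderivY (fun a b => (Ψ a b).1) z y
      - (Ψ z y).2 * pderivY (fun a b => (Φ a b).1) z y,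
   (Φ z y).1 * pderivZ (fun a b => (Ψ a b).2) z y
      - (Ψ z y).1 * pderivZ (fun a b => (Φ a b).2) z y
      + (Φ z y).2 * pderivY (fun a b => (Ψ a b).2) z y
      - (Ψ z y).2 * pderivY (fun a b => (Φ a b).2) z y)

/-!
`A₁ = σ y ∂_y` is vertical and nonzero for `y > 0`, so the three vectors span `ℝ²` as soon as
one of the two brackets has a nonzero `z`-component. Since `A₁` is linear in `y`,
`[A₀, A₁] = (-σ y (b₂ - b₁ z) z, σ b₂ y²)`, whose `z`-component vanishes for `z, y > 0` only on
the line `z = b₂ / b₁`. On that line the `z`-component of `[A₀, [A₀, A₁]]` reduces to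
`σ y b₂ · (A₀)₁(b₂ / b₁, y)`, and `(A₀)₁(b₂ / b₁, y)` is exactly the nondegeneracy quantity.
-/

theorem Submodule.span_insert_eq_top_of_fst_ne_zero {K : Type*} [Field K] {a : K} (ha : a ≠ 0)
    {S : Set (K × K)} (hS : ∃ v ∈ S, v.1 ≠ 0) :
    Submodule.span K (insert (0, a) S) = ⊤ := by
  obtain ⟨v, hvS, hv⟩ := hS
  set W := Submodule.span K (insert (0, a) S)
  have he₂ : ((0 : K), (1 : K)) ∈ W := by
    simpa [ha] using W.smul_mem a⁻¹ (Submodule.subset_span (Set.mem_insert _ _))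
  have he₁ : ((1 : K), (0 : K)) ∈ W := by
    convert W.smul_mem v.1⁻¹ (W.sub_mem (Submodule.subset_span (Set.mem_insert_of_mem _ hvS))
      (W.smul_mem v.2 he₂)) using 1
    ext <;> simp [hv]
  refine eq_top_iff'.2 fun x => ?_
  rw [show x = x.1 • ((1 : K), (0 : K)) + x.2 • ((0 : K), (1 : K)) by ext <;> simp]
  exact W.add_mem (W.smul_mem _ he₁) (W.smul_mem _ he₂)

def linearVerticalField (σ : ℝ) : ℝ → ℝ → ℝ × ℝ := fun _ y => (0, σ * y)

noncomputable def twoPatchDrift (a₁ a₂ b₁ b₂ α β σ z y : ℝ) : ℝ × ℝ :=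
  ((b₂ - b₁ * z) * z * y + β + (a₁ - a₂ - α + β) * z - α * z ^ 2,
    y * ((a₂ - β) - σ ^ 2 / 2 - b₂ * y) + α * z * y)

theorem lieBracket2_linearVerticalField (Φ : ℝ → ℝ → ℝ × ℝ) (σ z y : ℝ) :
    lieBracket2 Φ (linearVerticalField σ) z y =
      (-(σ * y * pderivY (fun a b => (Φ a b).1) z y),
        σ * ((Φ z y).2 - y * pderivY (fun a b => (Φ a b).2) z y)) := by
  simp only [lieBracket2, pderivZ, linearVerticalField, deriv_const', mul_zero, zero_mul, sub_self,
    pderivY, add_zero, zero_sub, differentiableAt_const, deriv_fun_mul, deriv_const_mul_id',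
    zero_add, Prod.mk.injEq, true_and]
  ring

section TwoPatch

variable {a₁ a₂ b₁ b₂ α β σ : ℝ}

theorem lieBracket2_twoPatchDrift_linearVerticalField (z y : ℝ) :
    lieBracket2 (twoPatchDrift a₁ a₂ b₁ b₂ α β σ) (linearVerticalField σ) z y =
      (-(σ * y * ((b₂ - b₁ * z) * z)), σ * b₂ * y ^ 2) := by
  simp (disch := fun_prop) only [lieBracket2_linearVerticalField, pderivY, twoPatchDrift,
    deriv_fun_sub, deriv_fun_add, deriv_const_mul_id', deriv_const', add_zero, deriv_fun_mul,
    sub_self, zero_mul, mul_zero, deriv_fun_pow, Nat.cast_ofNat, Nat.add_one_sub_one, pow_one,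
    sub_zero, deriv_id'', one_mul, deriv_div_const, zero_div, zero_sub, mul_neg, Prod.mk.injEq,
    true_and]
  ring

theorem lieBracket2_twoPatchDrift_fst_at_ratio (hb₁ : b₁ ≠ 0) (y : ℝ) :
    (lieBracket2 (twoPatchDrift a₁ a₂ b₁ b₂ α β σ)
        (lieBracket2 (twoPatchDrift a₁ a₂ b₁ b₂ α β σ) (linearVerticalField σ)) (b₂ / b₁) y).1 =
      σ * y * b₂ * (β + (b₂ / b₁) * (a₁ - a₂ - α + β) - α * (b₂ / b₁) ^ 2) := by
  rw [lieBracket2]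
  simp only [lieBracket2_twoPatchDrift_linearVerticalField]
  simp (disch := fun_prop) only [twoPatchDrift, pderivZ, deriv.fun_neg', deriv_fun_mul,
    deriv_const', zero_mul, mul_zero, add_zero, deriv_fun_sub, deriv_const_mul_id', zero_sub,
    neg_mul, deriv_id'', mul_one, zero_add, mul_neg, deriv_fun_add, deriv_fun_pow, Nat.cast_ofNat,
    Nat.add_one_sub_one, pow_one, sub_neg_eq_add, pderivY, deriv_div_const, zero_div, sub_self,
    sub_zero]
  field_simp
  ring

end TwoPatch

theorem hormander_condition_two_patch_equal_noise_general (a₁ a₂ b₁ b₂ α β σ : ℝ)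
    (hb₁ : 0 < b₁) (hb₂ : 0 < b₂) (hσ : σ ≠ 0)
    (hnd : β + (b₂ / b₁) * (a₁ - a₂ - α + β) - α * (b₂ / b₁) ^ 2 ≠ 0)
    (A₀ A₁ : ℝ → ℝ → ℝ × ℝ)
    (hA₀ : ∀ z y : ℝ, A₀ z y =
      ((b₂ - b₁ * z) * z * y + β + (a₁ - a₂ - α + β) * z - α * z ^ 2,
        y * ((a₂ - β) - σ ^ 2 / 2 - b₂ * y) + α * z * y))
    (hA₁ : ∀ z y : ℝ, A₁ z y = (0, σ * y)) :
    ∀ z y : ℝ, 0 < z → 0 < y →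
      Submodule.span ℝ
        ({A₁ z y, lieBracket2 A₀ A₁ z y,
          lieBracket2 A₀ (lieBracket2 A₀ A₁) z y} : Set (ℝ × ℝ)) = ⊤ := by
  obtain rfl : A₀ = twoPatchDrift a₁ a₂ b₁ b₂ α β σ := funext₂ hA₀
  obtain rfl : A₁ = linearVerticalField σ := funext₂ hA₁
  intro z y hz hy
  have hσy : σ * y ≠ 0 := mul_ne_zero hσ hy.ne'
  apply Submodule.span_insert_eq_top_of_fst_ne_zero hσy
  by_cases hz₀ : b₁ * z = b₂
  · obtain rfl : z = b₂ / b₁ := by field_simp; linarith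
    refine ⟨_, Set.mem_insert_of_mem _ rfl, ?_⟩
    rw [lieBracket2_twoPatchDrift_fst_at_ratio hb₁.ne']
    exact mul_ne_zero (mul_ne_zero hσy hb₂.ne') hnd
  · refine ⟨_, Set.mem_insert _ _, ?_⟩
    rw [lieBracket2_twoPatchDrift_linearVerticalField]
    exact neg_ne_zero.2 (mul_ne_zero hσy (mul_ne_zero (sub_ne_zero.2 (Ne.symm hz₀)) hz.ne'))

/-- **Hörmander's condition for the degenerate two-patch system with `σ₁ = σ₂ = σ`.**
Under the nondegeneracy condition `β + (b₂/b₁)(a₁-a₂-α+β) - α(b₂/b₁)² ≠ 0`, at every point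
`(z, y)` with `z > 0`, `y > 0` the vectors `A₁`, `[A₀,A₁]`, `[A₀,[A₀,A₁]]` span `ℝ²`. -/
theorem hormander_condition_two_patch_equal_noise (a₁ a₂ b₁ b₂ α β σ : ℝ)
    (hb₁ : 0 < b₁) (hb₂ : 0 < b₂) (hα : 0 < α) (hβ : 0 < β) (hσ : σ ≠ 0)
    (hnd : β + (b₂ / b₁) * (a₁ - a₂ - α + β) - α * (b₂ / b₁) ^ 2 ≠ 0)
    (A₀ A₁ : ℝ → ℝ → ℝ × ℝ)
    (hA₀ : ∀ z y : ℝ, A₀ z y =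
      ((b₂ - b₁ * z) * z * y + β + (a₁ - a₂ - α + β) * z - α * z ^ 2,
        y * ((a₂ - β) - σ ^ 2 / 2 - b₂ * y) + α * z * y))
    (hA₁ : ∀ z y : ℝ, A₁ z y = (0, σ * y)) :
    ∀ z y : ℝ, 0 < z → 0 < y →
      Submodule.span ℝ
        ({A₁ z y, lieBracket2 A₀ A₁ z y,
          lieBracket2 A₀ (lieBracket2 A₀ A₁) z y} : Set (ℝ × ℝ)) = ⊤ :=
  hormander_condition_two_patch_equal_noise_general a₁ a₂ b₁ b₂ α β σ hb₁ hb₂ hσ hnd A₀ A₁ hA₀ hA₁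
end
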